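/- arXiv:2410.08420 — 3 statements merged into one kernel-verified Lean document; each statement's English description precedes it below -/
import Mathlib

section
/- If Z is a standard normal random variable independent of N, then B(N) and √N · Z have the same distribution. -/
open MeasureTheory ProbabilityTheory Filter Set
open scoped Topology NNReal ENNReal

/-- A standard Brownian motion on `[0, ∞)`: measurable marginals, continuous paths,
`B 0 = 0`, independent increments, and Gaussian increments `B t - B s ~ N(0, t - s)`. -/
structure IsStandardBM {Ω : Type*} [MeasurableSpace Ω] (μ : Measure Ω)
    (B : ℝ → Ω → ℝ) : Prop where
  measurable : ∀ t, Measurable (B t)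
  cont_paths : ∀ ω, ContinuousOn (fun t => B t ω) (Set.Ici 0)
  start_zero : ∀ ω, B 0 ω = 0
  indep_incr : ∀ (n : ℕ) (t : ℕ → ℝ), Monotone t → (∀ i, 0 ≤ t i) →
    iIndepFun
      (fun i : Fin n => fun ω => B (t (i + 1)) ω - B (t i) ω) μ
  incr_gaussian : ∀ s t : ℝ, 0 ≤ s → s ≤ t →
    Measure.map (fun ω => B t ω - B s ω) μ = gaussianReal 0 (Real.toNNReal (t - s))

/-- If `Z` is a standard normal random variable independent of `N`, then `B(N)` and
`√N · Z` have the same distribution. -/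
theorem subordinated_eq_sqrt_mul_gaussian_law {Ω : Type*} [MeasurableSpace Ω] (μ : Measure Ω)
    [IsProbabilityMeasure μ] (B : ℝ → Ω → ℝ) (hB : IsStandardBM μ B)
    (N : Ω → ℝ) (hNmeas : Measurable N) (hNnonneg : ∀ ω, 0 ≤ N ω)
    (hindep : IndepFun N (fun ω t => B t ω) μ)
    (Z : Ω → ℝ) (hZmeas : Measurable Z) (hZ : Measure.map Z μ = gaussianReal 0 1)
    (hZN : IndepFun Z N μ) :
    Measure.map (fun ω => B (N ω) ω) μ =
      Measure.map (fun ω => Real.sqrt (N ω) * Z ω) μ := by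
  classical
  -- dyadic grid times and dyadic upper approximation of N
  set t : ℕ → ℕ → ℝ := fun k j => (j : ℝ) / 2 ^ k with ht
  have htnn : ∀ k j, 0 ≤ t k j := fun k j => div_nonneg (Nat.cast_nonneg j) (by positivity)
  set c : ℕ → Ω → ℕ := fun k ω => ⌈N ω * 2 ^ k⌉₊ with hc
  have hcmeas : ∀ k, Measurable (c k) :=
    fun k => Nat.measurable_ceil.comp (hNmeas.mul measurable_const)
  have h2k : ∀ k : ℕ, (0 : ℝ) < 2 ^ k := fun k => by positivity
  -- convergence of the dyadic approximation to N
  have hconv : ∀ ω, Tendsto (fun k => t k (c k ω)) atTop (𝓝 (N ω)) := by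
    intro ω
    have hlow : ∀ k, N ω ≤ t k (c k ω) := by
      intro k
      show N ω ≤ (c k ω : ℝ) / 2 ^ k
      rw [le_div_iff₀ (h2k k)]
      exact Nat.le_ceil _
    have hhigh : ∀ k, t k (c k ω) ≤ N ω + (1 / 2 : ℝ) ^ k := by
      intro k
      show (c k ω : ℝ) / 2 ^ k ≤ N ω + (1 / 2 : ℝ) ^ k
      rw [div_le_iff₀ (h2k k)]
      have h1 : ((⌈N ω * 2 ^ k⌉₊ : ℝ)) < N ω * 2 ^ k + 1 :=
        Nat.ceil_lt_add_one (mul_nonneg (hNnonneg ω) (h2k k).le)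
      have h2 : (N ω + (1 / 2 : ℝ) ^ k) * 2 ^ k = N ω * 2 ^ k + 1 := by
        rw [add_mul, ← mul_pow]; norm_num
      rw [h2]
      exact h1.le
    have hlim : Tendsto (fun k : ℕ => N ω + (1 / 2 : ℝ) ^ k) atTop (𝓝 (N ω)) := by
      have h3 : Tendsto (fun k : ℕ => (1 / 2 : ℝ) ^ k) atTop (𝓝 0) :=
        tendsto_pow_atTop_nhds_zero_of_lt_one (by norm_num) (by norm_num)
      simpa using tendsto_const_nhds.add h3
    exact tendsto_of_tendsto_of_tendsto_of_le_of_le tendsto_const_nhds hlim hlow hhigh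
  -- pointwise convergence of the subordinated approximations
  have hg_tendsto : ∀ ω, Tendsto (fun k => B (t k (c k ω)) ω) atTop (𝓝 (B (N ω) ω)) := by
    intro ω
    have h1 : Tendsto (fun k => t k (c k ω)) atTop (𝓝[Set.Ici 0] (N ω)) :=
      tendsto_nhdsWithin_of_tendsto_nhds_of_eventually_within _ (hconv ω)
        (Eventually.of_forall fun k => htnn k _)
    exact ((hB.cont_paths ω (N ω) (Set.mem_Ici.mpr (hNnonneg ω))).tendsto).comp h1
  have hg_meas : ∀ k, Measurable (fun ω => B (t k (c k ω)) ω) := by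
    intro k
    have h1 : Measurable (fun p : Ω × ℕ => B (t k p.2) p.1) :=
      measurable_from_prod_countable_left fun j => hB.measurable (t k j)
    exact h1.comp (measurable_id.prodMk (hcmeas k))
  have hBN : Measurable (fun ω => B (N ω) ω) :=
    measurable_of_tendsto_metrizable hg_meas (tendsto_pi_nhds.2 hg_tendsto)
  have hsqrt_meas : Measurable (fun ω => Real.sqrt (N ω) * Z ω) :=
    (hNmeas.sqrt).mul hZmeas
  -- the law of B s for s ≥ 0
  have hlaw : ∀ s : ℝ, 0 ≤ s →
      Measure.map (fun ω => B s ω) μ = gaussianReal 0 (Real.toNNReal s) := by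
    intro s hs
    have h := hB.incr_gaussian 0 s le_rfl hs
    simpa [hB.start_zero, sub_zero] using h
  -- the law of √s * Z for s ≥ 0
  have hsqrtlaw : ∀ s : ℝ, 0 ≤ s →
      Measure.map (fun ω => Real.sqrt s * Z ω) μ = gaussianReal 0 (Real.toNNReal s) := by
    intro s hs
    have h1 : Measure.map (fun ω => Real.sqrt s * Z ω) μ
        = Measure.map (fun x => Real.sqrt s * x) (Measure.map Z μ) := by
      rw [Measure.map_map (measurable_const_mul _) hZmeas]
      rfl
    rw [h1, hZ, gaussianReal_map_const_mul]
    have h2 : (⟨Real.sqrt s ^ 2, sq_nonneg _⟩ : NNReal) * 1 = Real.toNNReal s := by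
      ext
      simp [Real.sq_sqrt hs, Real.coe_toNNReal s hs]
    rw [mul_zero]; congr 1
  -- splitting a lintegral along the countable partition given by c k
  have hsplit : ∀ (k : ℕ) (G : ℕ → Ω → ENNReal),
      ∫⁻ ω, G (c k ω) ω ∂μ = ∑' j : ℕ, ∫⁻ ω in (c k) ⁻¹' {j}, G j ω ∂μ := by
    intro k G
    have hms : ∀ j : ℕ, MeasurableSet ((c k) ⁻¹' {j}) :=
      fun j => (hcmeas k) (measurableSet_singleton j)
    have hdis : Pairwise (Function.onFun Disjoint fun j : ℕ => (c k) ⁻¹' {j}) := by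
      intro i j hij
      exact Disjoint.preimage _ (by simpa using hij)
    have hu : (⋃ j : ℕ, (c k) ⁻¹' {j}) = Set.univ := by
      rw [← Set.preimage_iUnion, Set.iUnion_of_singleton]
      exact Set.preimage_univ
    calc ∫⁻ ω, G (c k ω) ω ∂μ
        = ∫⁻ ω in ⋃ j : ℕ, (c k) ⁻¹' {j}, G (c k ω) ω ∂μ := by
          rw [hu, Measure.restrict_univ]
      _ = ∑' j : ℕ, ∫⁻ ω in (c k) ⁻¹' {j}, G (c k ω) ω ∂μ := lintegral_iUnion hms hdis _
      _ = ∑' j : ℕ, ∫⁻ ω in (c k) ⁻¹' {j}, G j ω ∂μ := by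
          refine tsum_congr fun j => setLIntegral_congr_fun (hms j) ?_
          intro ω hω
          rw [Set.mem_preimage, Set.mem_singleton_iff] at hω
          simp only [hω]
  -- factorization over a set pulled back through N, for functions independent of N
  have hfact : ∀ (S : Set ℝ), MeasurableSet S → ∀ (W : Ω → ENNReal),
      IndepFun (S.indicator (fun _ => (1 : ENNReal)) ∘ N) W μ → Measurable W →
      ∫⁻ ω in N ⁻¹' S, W ω ∂μ = μ (N ⁻¹' S) * ∫⁻ ω, W ω ∂μ := by
    intro S hS W hind hW
    have hms : MeasurableSet (N ⁻¹' S) := hNmeas hS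
    have hφN : Measurable (S.indicator (fun _ => (1 : ENNReal)) ∘ N) :=
      (measurable_const.indicator hS).comp hNmeas
    calc ∫⁻ ω in N ⁻¹' S, W ω ∂μ
        = ∫⁻ ω, (N ⁻¹' S).indicator W ω ∂μ := (lintegral_indicator hms W).symm
      _ = ∫⁻ ω, (S.indicator (fun _ => (1 : ENNReal)) ∘ N) ω * W ω ∂μ := by
          refine lintegral_congr fun ω => ?_
          by_cases h : N ω ∈ S <;>
            simp [Function.comp, Set.indicator_apply, Set.mem_preimage, h]
      _ = (∫⁻ ω, (S.indicator (fun _ => (1 : ENNReal)) ∘ N) ω ∂μ) * ∫⁻ ω, W ω ∂μ :=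
          lintegral_mul_eq_lintegral_mul_lintegral_of_indepFun''
            hφN.aemeasurable hW.aemeasurable hind
      _ = μ (N ⁻¹' S) * ∫⁻ ω, W ω ∂μ := by
          congr 1
          have hpt : ∀ ω, (S.indicator (fun _ => (1 : ENNReal)) ∘ N) ω
              = (N ⁻¹' S).indicator (fun _ => (1 : ENNReal)) ω := by
            intro ω
            by_cases h : N ω ∈ S <;>
              simp [Function.comp, Set.indicator_apply, Set.mem_preimage, h]
          rw [lintegral_congr hpt]
          exact lintegral_indicator_one hms
  -- probability measures on the image side
  haveI hP1 : IsProbabilityMeasure (Measure.map (fun ω => B (N ω) ω) μ) :=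
    Measure.isProbabilityMeasure_map hBN.aemeasurable
  haveI hP2 : IsProbabilityMeasure (Measure.map (fun ω => Real.sqrt (N ω) * Z ω) μ) :=
    Measure.isProbabilityMeasure_map hsqrt_meas.aemeasurable
  refine ext_of_forall_lintegral_eq_of_IsFiniteMeasure fun f => ?_
  set F : ℝ → ENNReal := fun x => (f x : ENNReal) with hFdef
  have hFmeas : Measurable F := measurable_coe_nnreal_ennreal.comp f.continuous.measurable
  have hFcont : Continuous F := ENNReal.continuous_coe.comp f.continuous
  have hFbd : ∀ x : ℝ, F x ≤ ((nndist 0 f : NNReal) : ENNReal) := fun x =>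
    ENNReal.coe_le_coe.mpr (f.apply_le_nndist_zero x)
  -- the key per-level identity
  have hkey : ∀ k, ∫⁻ ω, F (B (t k (c k ω)) ω) ∂μ
      = ∫⁻ ω, F (Real.sqrt (t k (c k ω)) * Z ω) ∂μ := by
    intro k
    refine Eq.trans (hsplit k fun j ω => F (B (t k j) ω))
      (Eq.trans (tsum_congr fun j => ?_)
        (hsplit k fun j ω => F (Real.sqrt (t k j) * Z ω)).symm)
    set S : Set ℝ := (fun x => ⌈x * 2 ^ k⌉₊) ⁻¹' {j} with hSdef
    have hS : MeasurableSet S :=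
      (Nat.measurable_ceil.comp (measurable_id.mul_const _)) (measurableSet_singleton j)
    have hpre : (c k) ⁻¹' {j} = N ⁻¹' S := rfl
    have hφ : Measurable (S.indicator (fun _ => (1 : ENNReal))) :=
      measurable_const.indicator hS
    have hindL : IndepFun (S.indicator (fun _ => (1 : ENNReal)) ∘ N)
        (fun ω => F (B (t k j) ω)) μ :=
      hindep.comp hφ (hFmeas.comp (measurable_pi_apply (t k j)))
    have hindR : IndepFun (S.indicator (fun _ => (1 : ENNReal)) ∘ N)
        (fun ω => F (Real.sqrt (t k j) * Z ω)) μ :=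
      hZN.symm.comp hφ (hFmeas.comp (measurable_const_mul _))
    have hL : ∫⁻ ω in N ⁻¹' S, F (B (t k j) ω) ∂μ
        = μ (N ⁻¹' S) * ∫⁻ x, F x ∂(gaussianReal 0 (Real.toNNReal (t k j))) := by
      rw [hfact S hS (fun ω => F (B (t k j) ω)) hindL (hFmeas.comp (hB.measurable _)),
        ← hlaw (t k j) (htnn k j), lintegral_map hFmeas (hB.measurable _)]
    have hR : ∫⁻ ω in N ⁻¹' S, F (Real.sqrt (t k j) * Z ω) ∂μ
        = μ (N ⁻¹' S) * ∫⁻ x, F x ∂(gaussianReal 0 (Real.toNNReal (t k j))) := by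
      have hm : Measurable fun ω => Real.sqrt (t k j) * Z ω :=
        (measurable_const_mul _).comp hZmeas
      rw [hfact S hS (fun ω => F (Real.sqrt (t k j) * Z ω)) hindR (hFmeas.comp hm),
        ← hsqrtlaw (t k j) (htnn k j), lintegral_map hFmeas hm]
    rw [hpre, hL, hR]
  -- passing to the limit on both sides
  have hlimL : Tendsto (fun k => ∫⁻ ω, F (B (t k (c k ω)) ω) ∂μ) atTop
      (𝓝 (∫⁻ ω, F (B (N ω) ω) ∂μ)) := by
    refine tendsto_lintegral_of_dominated_convergence (fun _ => ((nndist 0 f : NNReal) : ENNReal))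
      (fun k => hFmeas.comp (hg_meas k)) (fun k => Eventually.of_forall fun ω => hFbd _)
      ?_ (Eventually.of_forall fun ω => (hFcont.tendsto _).comp (hg_tendsto ω))
    rw [lintegral_const]
    exact ENNReal.mul_ne_top ENNReal.coe_ne_top (measure_ne_top μ _)
  have hlimR : Tendsto (fun k => ∫⁻ ω, F (Real.sqrt (t k (c k ω)) * Z ω) ∂μ) atTop
      (𝓝 (∫⁻ ω, F (Real.sqrt (N ω) * Z ω) ∂μ)) := by
    have hmeasR : ∀ k, Measurable fun ω => Real.sqrt (t k (c k ω)) * Z ω := by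
      intro k
      have h1 : Measurable fun ω => t k (c k ω) :=
        (measurable_from_top (f := t k)).comp (hcmeas k)
      exact (h1.sqrt).mul hZmeas
    refine tendsto_lintegral_of_dominated_convergence (fun _ => ((nndist 0 f : NNReal) : ENNReal))
      (fun k => hFmeas.comp (hmeasR k)) (fun k => Eventually.of_forall fun ω => hFbd _)
      ?_ (Eventually.of_forall fun ω => ?_)
    · rw [lintegral_const]
      exact ENNReal.mul_ne_top ENNReal.coe_ne_top (measure_ne_top μ _)
    · exact (hFcont.tendsto _).comp
        (((Real.continuous_sqrt.tendsto _).comp (hconv ω)).mul_const (Z ω))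
  have heq : ∫⁻ ω, F (B (N ω) ω) ∂μ = ∫⁻ ω, F (Real.sqrt (N ω) * Z ω) ∂μ :=
    tendsto_nhds_unique ((tendsto_congr hkey).mp hlimL) hlimR
  calc ∫⁻ x, (f x : ENNReal) ∂(Measure.map (fun ω => B (N ω) ω) μ)
      = ∫⁻ ω, F (B (N ω) ω) ∂μ := lintegral_map hFmeas hBN
    _ = ∫⁻ ω, F (Real.sqrt (N ω) * Z ω) ∂μ := heq
    _ = ∫⁻ x, (f x : ENNReal) ∂(Measure.map (fun ω => Real.sqrt (N ω) * Z ω) μ) :=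
        (lintegral_map hFmeas hsqrt_meas).symm
end

section
/- A regular conditional distribution of B(N) given N is the Gaussian kernel n ↦ N(0, n): for P-almost every ω, the conditional distribution of B(N) given N, evaluated at N(ω), equals the Gaussian measure on ℝ with mean 0 and variance N(ω). -/
open MeasureTheory ProbabilityTheory Filter Set
open scoped Topology ENNReal NNReal

lemma gauss_scale (t : ℝ) :
    (gaussianReal 0 1).map (fun z => Real.sqrt (max t 0) * z) = gaussianReal 0 t.toNNReal := by
  rw [show (fun z => Real.sqrt (max t 0) * z) = (Real.sqrt (max t 0) * ·) from rfl,
    gaussianReal_map_const_mul]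
  congr 1
  · simp
  · ext
    simp [Real.sq_sqrt (le_max_right t 0), Real.coe_toNNReal', mul_comm]

lemma measurable_gscale : Measurable (fun p : ℝ × ℝ => Real.sqrt (max p.1 0) * p.2) :=
  ((measurable_fst.max measurable_const).sqrt).mul measurable_snd

noncomputable def gaussKer : Kernel ℝ ℝ :=
  Kernel.map ((Kernel.deterministic id measurable_id).prod (Kernel.const ℝ (gaussianReal 0 1)))
    (fun p : ℝ × ℝ => Real.sqrt (max p.1 0) * p.2)

lemma gaussKer_apply (n : ℝ) : gaussKer n = gaussianReal 0 n.toNNReal := by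
  rw [gaussKer, Kernel.map_apply _ measurable_gscale, Kernel.prod_apply,
    Kernel.deterministic_apply, Kernel.const_apply, Measure.dirac_prod,
    Measure.map_map measurable_gscale measurable_prodMk_left]
  exact gauss_scale n

instance : IsMarkovKernel gaussKer := by
  constructor
  intro n
  rw [gaussKer_apply]
  infer_instance

/-- dyadic upper approximation -/
noncomputable def dyd (k : ℕ) (n : ℝ) : ℝ := (⌈(2:ℝ)^k * n⌉₊ : ℝ) / 2^k

lemma measurable_dyd (k : ℕ) : Measurable (dyd k) :=
  measurable_from_nat.comp (Nat.measurable_ceil.comp (measurable_const_mul _)) |>.div_const _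

lemma dyd_nonneg (k : ℕ) (n : ℝ) : 0 ≤ dyd k n :=
  div_nonneg (Nat.cast_nonneg _) (by positivity)

lemma dyd_tendsto {n : ℝ} (hn : 0 ≤ n) : Tendsto (fun k => dyd k n) atTop (𝓝 n) := by
  have h2 : ∀ k : ℕ, (0:ℝ) < 2^k := fun k => by positivity
  have hlow : ∀ k, n ≤ dyd k n := by
    intro k
    rw [dyd, le_div_iff₀ (h2 k), mul_comm]
    exact Nat.le_ceil _
  have hup : ∀ k, dyd k n ≤ n + ((2:ℝ)⁻¹)^k := by
    intro k
    rw [dyd, div_le_iff₀ (h2 k)]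
    have := (Nat.ceil_lt_add_one (by positivity : 0 ≤ (2:ℝ)^k * n)).le
    calc (⌈(2:ℝ)^k * n⌉₊ : ℝ) ≤ 2^k * n + 1 := this
      _ = (n + ((2:ℝ)⁻¹)^k) * 2^k := by
          rw [add_mul, inv_pow, inv_mul_cancel₀ (h2 k).ne']; ring
  refine tendsto_of_tendsto_of_tendsto_of_le_of_le tendsto_const_nhds ?_ hlow hup
  have : Tendsto (fun k : ℕ => n + ((2:ℝ)⁻¹)^k) atTop (𝓝 (n + 0)) :=
    tendsto_const_nhds.add (tendsto_pow_atTop_nhds_zero_of_lt_one (by norm_num) (by norm_num))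
  simpa using this

/-- A regular conditional distribution of `B(N)` given `N` is the Gaussian kernel
`n ↦ N(0, n)`: for `P`-a.e. `ω`, the conditional distribution of `B(N)` given `N`,
evaluated at `N ω`, is the Gaussian measure on `ℝ` with mean `0` and variance `N ω`
(the Dirac mass at `0` when `N ω = 0`). -/
theorem condDistrib_subordinated_eq_gaussian {Ω : Type*} [MeasurableSpace Ω] (μ : Measure Ω)
    [IsProbabilityMeasure μ] (B : ℝ → Ω → ℝ) (hB : IsStandardBM μ B)
    (N : Ω → ℝ) (hNmeas : Measurable N) (hNnonneg : ∀ ω, 0 ≤ N ω)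
    (hindep : IndepFun N (fun ω t => B t ω) μ) :
    ∀ᵐ ω ∂μ,
      condDistrib (fun ω => B (N ω) ω) N μ (N ω) =
        gaussianReal 0 (Real.toNNReal (N ω)) := by
  classical
  set ν : Measure ℝ := gaussianReal 0 1 with hν
  haveI : IsProbabilityMeasure ν := by rw [hν]; infer_instance
  set path : Ω → ℝ → ℝ := fun ω t => B t ω with hpathdef
  have hpath : Measurable path := measurable_pi_lambda _ fun t => hB.measurable t
  have hBt : ∀ t : ℝ, 0 ≤ t → μ.map (B t) = gaussianReal 0 t.toNNReal := by
    intro t ht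
    have := hB.incr_gaussian 0 t le_rfl ht
    simpa [hB.start_zero, sub_zero] using this
  -- approximations
  set Y : ℕ → Ω → ℝ := fun k ω => B (dyd k (N ω)) ω with hYdef
  have hYmeas : ∀ k, Measurable (Y k) := by
    intro k
    have h1 : Measurable (fun q : Ω × ℕ => B ((q.2 : ℝ) / 2^k) q.1) :=
      measurable_from_prod_countable_left (fun m : ℕ => by exact hB.measurable ((m : ℝ) / 2^k))
    have h2 : Measurable (fun ω => (ω, ⌈(2:ℝ)^k * N ω⌉₊)) :=
      measurable_id.prodMk
        ((Nat.measurable_ceil.comp (measurable_const_mul _)).comp hNmeas)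
    exact h1.comp h2
  have hconv : ∀ ω, Tendsto (fun k => Y k ω) atTop (𝓝 (B (N ω) ω)) := by
    intro ω
    have hc : ContinuousWithinAt (fun t => B t ω) (Set.Ici 0) (N ω) :=
      hB.cont_paths ω (N ω) (mem_Ici.2 (hNnonneg ω))
    refine hc.tendsto.comp ?_
    refine tendsto_nhdsWithin_of_tendsto_nhds_of_eventually_within _
      (dyd_tendsto (hNnonneg ω)) (Eventually.of_forall fun k => mem_Ici.2 (dyd_nonneg k _))
  have hYlim : Measurable (fun ω => B (N ω) ω) :=
    measurable_of_tendsto_metrizable hYmeas (tendsto_pi_nhds.2 hconv)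
  -- joint law of (N, path)
  have hmap : μ.map (fun ω => (N ω, path ω)) = (μ.map N).prod (μ.map path) :=
    (indepFun_iff_map_prod_eq_prod_map_map hNmeas.aemeasurable hpath.aemeasurable).1 hindep
  haveI : IsProbabilityMeasure (μ.map N) := Measure.isProbabilityMeasure_map hNmeas.aemeasurable
  haveI : IsProbabilityMeasure (μ.map path) := Measure.isProbabilityMeasure_map hpath.aemeasurable
  have hNae : ∀ᵐ n ∂(μ.map N), 0 ≤ n := by
    rw [ae_map_iff hNmeas.aemeasurable measurableSet_Ici]
    exact Eventually.of_forall hNnonneg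
  -- key identity of measures
  have key : μ.map (fun ω => (N ω, B (N ω) ω)) = (μ.map N) ⊗ₘ gaussKer := by
    haveI : IsProbabilityMeasure (μ.map (fun ω => (N ω, B (N ω) ω))) :=
      Measure.isProbabilityMeasure_map (hNmeas.prodMk hYlim).aemeasurable
    refine ext_of_forall_lintegral_eq_of_IsFiniteMeasure ?_
    intro f
    have hf_meas : Measurable (fun p : ℝ × ℝ => (f p : ℝ≥0∞)) :=
      measurable_coe_nnreal_ennreal.comp f.continuous.measurable
    set C : ℝ≥0∞ := (nndist f 0 : ℝ≥0∞) with hC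
    have hfC : ∀ p : ℝ × ℝ, (f p : ℝ≥0∞) ≤ C := by
      intro p
      rw [hC, ENNReal.coe_le_coe, ← NNReal.coe_le_coe, coe_nndist]
      have h1 := BoundedContinuousFunction.dist_coe_le_dist (f := f) (g := 0) p
      have h2 : dist (f p) ((0 : BoundedContinuousFunction (ℝ × ℝ) ℝ≥0) p) = (f p : ℝ) := by
        simp [NNReal.dist_eq]
      rwa [h2] at h1
    have hCtop : C ≠ ⊤ := by rw [hC]; exact ENNReal.coe_ne_top
    have hCint : ∫⁻ _, C ∂μ ≠ ⊤ := by
      rw [lintegral_const]; exact ENNReal.mul_ne_top hCtop (measure_ne_top _ _)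
    set H : ℝ → ℝ → ℝ≥0∞ := fun t n => ∫⁻ z, (f (n, Real.sqrt (max t 0) * z) : ℝ≥0∞) ∂ν
      with hHdef
    -- inner law identity
    have hinner : ∀ t : ℝ, 0 ≤ t → ∀ n : ℝ,
        ∫⁻ w, (f (n, w t) : ℝ≥0∞) ∂(μ.map path) = H t n := by
      intro t ht n
      have hev : Measurable (fun w : ℝ → ℝ => (f (n, w t) : ℝ≥0∞)) :=
        hf_meas.comp (measurable_const.prodMk (measurable_pi_apply t))
      have hsec : Measurable (fun x : ℝ => (f (n, x) : ℝ≥0∞)) :=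
        hf_meas.comp (measurable_const.prodMk measurable_id)
      calc ∫⁻ w, (f (n, w t) : ℝ≥0∞) ∂(μ.map path)
          = ∫⁻ ω, (f (n, B t ω) : ℝ≥0∞) ∂μ := lintegral_map hev hpath
        _ = ∫⁻ x, (f (n, x) : ℝ≥0∞) ∂(μ.map (B t)) :=
            (lintegral_map hsec (hB.measurable t)).symm
        _ = ∫⁻ x, (f (n, x) : ℝ≥0∞) ∂(ν.map (fun z => Real.sqrt (max t 0) * z)) := by
            rw [hBt t ht, hν, gauss_scale t]
        _ = H t n := lintegral_map hsec (measurable_const_mul _)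
    -- per-k identity
    have hk : ∀ k : ℕ, ∫⁻ ω, (f (N ω, Y k ω) : ℝ≥0∞) ∂μ
        = ∫⁻ n, H (dyd k n) n ∂(μ.map N) := by
      intro k
      have hFk : Measurable (fun p : ℝ × (ℝ → ℝ) => p.2 (dyd k p.1)) := by
        have h1 : Measurable (fun q : (ℝ → ℝ) × ℕ => q.1 ((q.2 : ℝ) / 2^k)) :=
          measurable_from_prod_countable_left (fun m : ℕ => by exact measurable_pi_apply ((m : ℝ) / 2^k))
        exact h1.comp (measurable_snd.prodMk
          ((Nat.measurable_ceil.comp (measurable_const_mul _)).comp measurable_fst))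
      have hg : Measurable (fun p : ℝ × (ℝ → ℝ) => (f (p.1, p.2 (dyd k p.1)) : ℝ≥0∞)) :=
        hf_meas.comp (measurable_fst.prodMk hFk)
      calc ∫⁻ ω, (f (N ω, Y k ω) : ℝ≥0∞) ∂μ
          = ∫⁻ p, (f (p.1, p.2 (dyd k p.1)) : ℝ≥0∞) ∂(μ.map (fun ω => (N ω, path ω))) := by
            rw [lintegral_map hg (hNmeas.prodMk hpath)]
        _ = ∫⁻ n, ∫⁻ w, (f (n, w (dyd k n)) : ℝ≥0∞) ∂(μ.map path) ∂(μ.map N) := by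
            rw [hmap, lintegral_prod _ hg.aemeasurable]
        _ = ∫⁻ n, H (dyd k n) n ∂(μ.map N) :=
            lintegral_congr fun n => hinner _ (dyd_nonneg k n) n
    -- limiting identities
    have hHmeas : ∀ g : ℝ → ℝ, Measurable g →
        Measurable (fun n => H (g n) n) := by
      intro g hgm
      have hm : Measurable (fun q : ℝ × ℝ =>
          (f (q.1, Real.sqrt (max (g q.1) 0) * q.2) : ℝ≥0∞)) :=
        hf_meas.comp (measurable_fst.prodMk
          ((((hgm.comp measurable_fst).max measurable_const).sqrt).mul measurable_snd))
      exact hm.lintegral_prod_right'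
    have hHle : ∀ t n, H t n ≤ C := by
      intro t n
      calc H t n ≤ ∫⁻ _, C ∂ν := lintegral_mono fun z => hfC _
        _ = C := by simp
    have L1 : Tendsto (fun k => ∫⁻ ω, (f (N ω, Y k ω) : ℝ≥0∞) ∂μ) atTop
        (𝓝 (∫⁻ ω, (f (N ω, B (N ω) ω) : ℝ≥0∞) ∂μ)) := by
      refine tendsto_lintegral_of_dominated_convergence (fun _ => C)
        (fun k => hf_meas.comp (hNmeas.prodMk (hYmeas k)))
        (fun k => Eventually.of_forall fun ω => hfC _) hCint ?_
      refine Eventually.of_forall fun ω => ?_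
      have : Tendsto (fun k => (N ω, Y k ω)) atTop (𝓝 (N ω, B (N ω) ω)) :=
        tendsto_const_nhds.prodMk_nhds (hconv ω)
      exact (ENNReal.continuous_coe.tendsto _).comp ((f.continuous.tendsto _).comp this)
    have L2 : Tendsto (fun k => ∫⁻ n, H (dyd k n) n ∂(μ.map N)) atTop
        (𝓝 (∫⁻ n, H n n ∂(μ.map N))) := by
      refine tendsto_lintegral_of_dominated_convergence (fun _ => C)
        (fun k => hHmeas _ (measurable_dyd k))
        (fun k => Eventually.of_forall fun n => hHle _ _)
        (by rw [lintegral_const]; exact ENNReal.mul_ne_top hCtop (measure_ne_top _ _)) ?_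
      filter_upwards [hNae] with n hn
      -- H (dyd k n) n → H n n
      refine tendsto_lintegral_of_dominated_convergence (fun _ => C)
        (fun k => hf_meas.comp (measurable_const.prodMk (measurable_id.const_mul _)))
        (fun k => Eventually.of_forall fun z => hfC _)
        (by rw [lintegral_const]; exact ENNReal.mul_ne_top hCtop (measure_ne_top _ _)) ?_
      refine Eventually.of_forall fun z => ?_
      have ht : Tendsto (fun k => dyd k n) atTop (𝓝 n) := dyd_tendsto hn
      have hsq : Tendsto (fun k => Real.sqrt (max (dyd k n) 0) * z) atTop
          (𝓝 (Real.sqrt (max n 0) * z)) :=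
        ((Real.continuous_sqrt.tendsto _).comp (ht.max tendsto_const_nhds)).mul_const z
      exact (ENNReal.continuous_coe.tendsto _).comp
        ((f.continuous.tendsto _).comp (tendsto_const_nhds.prodMk_nhds hsq))
    -- combine
    have e1 : ∫⁻ p, (f p : ℝ≥0∞) ∂(μ.map (fun ω => (N ω, B (N ω) ω)))
        = ∫⁻ ω, (f (N ω, B (N ω) ω) : ℝ≥0∞) ∂μ :=
      lintegral_map hf_meas (hNmeas.prodMk hYlim)
    have e2 : ∫⁻ p, (f p : ℝ≥0∞) ∂((μ.map N) ⊗ₘ gaussKer)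
        = ∫⁻ n, ∫⁻ x, (f (n, x) : ℝ≥0∞) ∂(gaussKer n) ∂(μ.map N) :=
      Measure.lintegral_compProd hf_meas
    have e3 : ∀ n : ℝ, ∫⁻ x, (f (n, x) : ℝ≥0∞) ∂(gaussKer n) = H n n := by
      intro n
      rw [gaussKer_apply, ← gauss_scale n]
      exact lintegral_map (hf_meas.comp (measurable_const.prodMk measurable_id))
        (measurable_const_mul _)
    have heq : (fun k => ∫⁻ ω, (f (N ω, Y k ω) : ℝ≥0∞) ∂μ)
        = fun k => ∫⁻ n, H (dyd k n) n ∂(μ.map N) := funext hk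
    rw [heq] at L1
    rw [e1, e2, lintegral_congr e3]
    exact tendsto_nhds_unique L1 L2
  -- conclude
  have h1 := condDistrib_ae_eq_of_measure_eq_compProd N hYlim.aemeasurable key
  have h2 := ae_of_ae_map hNmeas.aemeasurable h1
  filter_upwards [h2] with ω hω
  rw [hω, gaussKer_apply]
end

section
/- Let M and N be nonnegative real-valued random variables with M ≤ N almost surely, such that the pair (M, N) is independent of B and E[N] < ∞. Then E[(B(N) − B(M))²] = E[N − M] = E[N] − E[M]. -/
open MeasureTheory ProbabilityTheory Filter Set

section Aux

open Real NNReal ENNReal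


lemma integral_sq_mul_exp {b : ℝ} (hb : 0 < b) :
    ∫ x : ℝ, x ^ 2 * Real.exp (-b * x ^ 2) = Real.sqrt π / 2 * b ^ (-(3:ℝ)/2) := by
  have h1 : ∫ x in Ioi (0:ℝ), x ^ (2:ℝ) * Real.exp (-b * x ^ (2:ℝ))
      = b ^ (-((2:ℝ) + 1) / 2) * (1 / 2) * Real.Gamma (((2:ℝ) + 1) / 2) :=
    integral_rpow_mul_exp_neg_mul_rpow two_pos (by norm_num) hb
  have h2 : ∀ x : ℝ, 0 < x → x ^ (2:ℝ) * Real.exp (-b * x ^ (2:ℝ))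
      = x ^ 2 * Real.exp (-b * x ^ 2) := by
    intro x hx
    rw [show (2:ℝ) = ((2:ℕ):ℝ) by norm_num, Real.rpow_natCast]
  have h3 : ∫ x in Ioi (0:ℝ), x ^ 2 * Real.exp (-b * x ^ 2)
      = b ^ (-(3:ℝ)/2) * (1/2) * Real.Gamma (3/2) := by
    have := (setIntegral_congr_fun (μ := volume) measurableSet_Ioi
      (fun x hx => (h2 x hx))).symm.trans h1
    rw [this]
    norm_num
  have habs : ∫ x : ℝ, x ^ 2 * Real.exp (-b * x ^ 2)
      = 2 * ∫ x in Ioi (0:ℝ), x ^ 2 * Real.exp (-b * x ^ 2) := by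
    rw [← integral_comp_abs (f := fun x => x ^ 2 * Real.exp (-b * x ^ 2))]
    congr 1 with x
    rw [sq_abs]
  have hG : Real.Gamma (3/2) = Real.sqrt π / 2 := by
    have := Real.Gamma_add_one (s := 1/2) (by norm_num)
    rw [Real.Gamma_one_half_eq] at this
    norm_num at this ⊢
    linarith
  rw [habs, h3, hG]
  ring


lemma lintegral_sq_gaussianReal (v : ℝ≥0) :
    ∫⁻ x, ENNReal.ofReal (x ^ 2) ∂(gaussianReal 0 v) = ENNReal.ofReal (v : ℝ) := by
  by_cases hv : v = 0
  · simp [hv, lintegral_dirac]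
  · rw [gaussianReal_of_var_ne_zero _ hv,
      lintegral_withDensity_eq_lintegral_mul _ (measurable_gaussianPDF _ _)
        (by exact (measurable_id.pow_const 2).ennreal_ofReal)]
    have hvpos : (0:ℝ) < v := by positivity
    set b : ℝ := ((2:ℝ) * v)⁻¹ with hbdef
    have hbpos : 0 < b := by positivity
    have hpdf : ∀ x : ℝ, gaussianPDFReal 0 v x
        = (Real.sqrt (2 * π * v))⁻¹ * Real.exp (-b * x ^ 2) := by
      intro x
      rw [gaussianPDFReal]
      congr 1
      rw [sub_zero]
      congr 1
      rw [hbdef]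
      field_simp
    have heq : ∀ x : ℝ, (gaussianPDF 0 v * fun x => ENNReal.ofReal (x ^ 2)) x
        = ENNReal.ofReal ((Real.sqrt (2 * π * v))⁻¹ * (x ^ 2 * Real.exp (-b * x ^ 2))) := by
      intro x
      simp only [Pi.mul_apply, gaussianPDF, hpdf x]
      rw [← ENNReal.ofReal_mul (by positivity)]
      ring_nf
    rw [lintegral_congr heq]
    have hint : Integrable (fun x : ℝ => (Real.sqrt (2 * π * v))⁻¹
        * (x ^ 2 * Real.exp (-b * x ^ 2))) := by
      refine Integrable.const_mul ?_ _
      have := integrable_rpow_mul_exp_neg_mul_sq hbpos (s := 2) (by norm_num)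
      refine this.congr ?_
      filter_upwards with x
      rw [show (2:ℝ) = ((2:ℕ):ℝ) by norm_num, Real.rpow_natCast]
    rw [← ofReal_integral_eq_lintegral_ofReal hint
      (Filter.Eventually.of_forall fun x => by positivity)]
    congr 1
    rw [integral_const_mul, integral_sq_mul_exp hbpos]
    have h2v : (0:ℝ) < 2 * v := by positivity
    have hb32 : b ^ (-(3:ℝ)/2) = (2 * (v:ℝ)) * Real.sqrt (2 * v) := by
      have hexp : (-1 : ℝ) * (-3/2) = 1 + 1/2 := by norm_num
      rw [hbdef, ← Real.rpow_neg_one, ← Real.rpow_mul h2v.le, hexp,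
        Real.rpow_add h2v, Real.rpow_one, Real.sqrt_eq_rpow]
    rw [hb32]
    have hsplit : Real.sqrt (2 * π * v) = Real.sqrt (2 * v) * Real.sqrt π := by
      rw [show 2 * π * (v:ℝ) = (2 * (v:ℝ)) * π by ring, Real.sqrt_mul h2v.le]
    rw [hsplit]
    have h1 : Real.sqrt (2 * (v:ℝ)) ≠ 0 := ne_of_gt (Real.sqrt_pos.mpr h2v)
    have h2 : Real.sqrt π ≠ 0 := ne_of_gt (Real.sqrt_pos.mpr Real.pi_pos)
    field_simp

noncomputable def dy (k : ℕ) (x : ℝ) : ℝ := (⌈x * 2 ^ k⌉ : ℤ) / 2 ^ k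

lemma le_dy (k : ℕ) (x : ℝ) : x ≤ dy k x := by
  rw [dy, le_div_iff₀ (by positivity)]
  exact Int.le_ceil _

lemma dy_le (k : ℕ) (x : ℝ) : dy k x ≤ x + (1/2) ^ k := by
  rw [dy, div_le_iff₀ (by positivity)]
  calc (⌈x * 2 ^ k⌉ : ℝ) ≤ x * 2 ^ k + 1 := (Int.ceil_lt_add_one _).le
    _ = (x + (1/2)^k) * 2 ^ k := by
        field_simp
        rw [mul_add, ← mul_pow, show (2:ℝ) * (1/2) = 1 by norm_num, one_pow, mul_comm]
    _ ≤ (x + (1/2)^k) * 2 ^ k := le_rfl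

lemma measurable_dy (k : ℕ) : Measurable (dy k) :=
  (measurable_from_top.comp (Int.measurable_ceil.comp
    (measurable_id.mul_const _))).div_const _

lemma tendsto_dy (x : ℝ) : Tendsto (fun k => dy k x) atTop (nhds x) := by
  have h1 : Tendsto (fun k : ℕ => x + (1/2:ℝ) ^ k) atTop (nhds x) := by
    have := tendsto_pow_atTop_nhds_zero_of_lt_one (by norm_num : (0:ℝ) ≤ 1/2) (by norm_num)
    simpa using tendsto_const_nhds.add this
  exact tendsto_of_tendsto_of_tendsto_of_le_of_le tendsto_const_nhds h1
    (fun k => le_dy k x) (fun k => dy_le k x)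

lemma measurable_eval_dy (k : ℕ) : Measurable fun p : ℝ × (ℝ → ℝ) => p.2 (dy k p.1) := by
  have hrepr : (fun p : ℝ × (ℝ → ℝ) => p.2 (dy k p.1))
      = (fun q : (ℝ → ℝ) × ℤ => q.1 ((q.2 : ℝ) / 2 ^ k))
        ∘ (fun p : ℝ × (ℝ → ℝ) => (p.2, ⌈p.1 * 2 ^ k⌉)) := rfl
  rw [hrepr]
  have hA : Measurable fun q : (ℝ → ℝ) × ℤ => q.1 ((q.2 : ℝ) / 2 ^ k) :=
    measurable_from_prod_countable_left fun z => measurable_pi_apply ((z : ℝ) / 2 ^ k)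
  have hB : Measurable fun p : ℝ × (ℝ → ℝ) => (p.2, (⌈p.1 * 2 ^ k⌉ : ℤ)) :=
    measurable_snd.prodMk (Int.measurable_ceil.comp (measurable_fst.mul_const _))
  exact hA.comp hB

noncomputable def Fsq (p : (ℝ × ℝ) × (ℝ → ℝ)) : ℝ≥0∞ :=
  Filter.limsup (fun k : ℕ =>
    ENNReal.ofReal ((p.2 (dy k p.1.2) - p.2 (dy k p.1.1)) ^ 2)) Filter.atTop

lemma measurable_Fsq : Measurable Fsq := by
  refine Measurable.limsup fun k => ?_
  have h1 : Measurable fun p : (ℝ × ℝ) × (ℝ → ℝ) => p.2 (dy k p.1.2) :=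
    (measurable_eval_dy k).comp ((measurable_fst.snd).prodMk measurable_snd)
  have h2 : Measurable fun p : (ℝ × ℝ) × (ℝ → ℝ) => p.2 (dy k p.1.1) :=
    (measurable_eval_dy k).comp ((measurable_fst.fst).prodMk measurable_snd)
  exact ((h1.sub h2).pow_const 2).ennreal_ofReal

lemma Fsq_eval {f : ℝ → ℝ} (hf : ContinuousOn f (Set.Ici 0)) {m n : ℝ}
    (hm : 0 ≤ m) (hn : 0 ≤ n) :
    Fsq ((m, n), f) = ENNReal.ofReal ((f n - f m) ^ 2) := by
  have key : ∀ x : ℝ, 0 ≤ x → Tendsto (fun k => f (dy k x)) atTop (nhds (f x)) := by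
    intro x hx
    have h1 : Tendsto (fun k => dy k x) atTop (nhdsWithin x (Set.Ici 0)) := by
      rw [tendsto_nhdsWithin_iff]
      exact ⟨tendsto_dy x, Eventually.of_forall fun k => le_trans hx (le_dy k x)⟩
    exact ((hf x hx).tendsto).comp h1
  have h0 : Tendsto (fun k => (f (dy k n) - f (dy k m)) ^ 2) atTop
      (nhds ((f n - f m) ^ 2)) := ((key n hn).sub (key m hm)).pow 2
  have h2 : Tendsto (fun k => ENNReal.ofReal ((f (dy k n) - f (dy k m)) ^ 2)) atTop
      (nhds (ENNReal.ofReal ((f n - f m) ^ 2))) :=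
    (ENNReal.continuous_ofReal.tendsto _).comp h0
  exact h2.limsup_eq

lemma bm_sq_moment {Ω : Type*} [MeasurableSpace Ω] (μ : Measure Ω) [IsProbabilityMeasure μ]
    (B : ℝ → Ω → ℝ) (hB : IsStandardBM μ B) {s t : ℝ} (hs : 0 ≤ s) (hst : s ≤ t) :
    ∫⁻ ω, ENNReal.ofReal ((B t ω - B s ω) ^ 2) ∂μ = ENNReal.ofReal (t - s) := by
  have hmeas : Measurable fun ω => B t ω - B s ω := (hB.measurable t).sub (hB.measurable s)
  have h1 : ∫⁻ ω, ENNReal.ofReal ((B t ω - B s ω) ^ 2) ∂μ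
      = ∫⁻ x, ENNReal.ofReal (x ^ 2) ∂(Measure.map (fun ω => B t ω - B s ω) μ) :=
    (lintegral_map ((measurable_id.pow_const 2).ennreal_ofReal) hmeas).symm
  rw [h1, hB.incr_gaussian s t hs hst, lintegral_sq_gaussianReal,
    Real.coe_toNNReal _ (by linarith)]

end Aux

/-- If `M ≤ N` a.s., the pair `(M, N)` is independent of `B`, and `E[N] < ∞`, then
`E[(B(N) − B(M))²] = E[N − M] = E[N] − E[M]` (integrated form of the Itô formula for
the square of a variance-Hawkes process). -/
theorem increment_second_moment_subordinated {Ω : Type*} [MeasurableSpace Ω]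
    (μ : Measure Ω) [IsProbabilityMeasure μ] (B : ℝ → Ω → ℝ) (hB : IsStandardBM μ B)
    (M N : Ω → ℝ) (hMmeas : Measurable M) (hNmeas : Measurable N)
    (hMnonneg : ∀ ω, 0 ≤ M ω) (hNnonneg : ∀ ω, 0 ≤ N ω)
    (hMN : ∀ᵐ ω ∂μ, M ω ≤ N ω)
    (hindep : IndepFun (fun ω => (M ω, N ω)) (fun ω t => B t ω) μ)
    (hint : Integrable N μ) :
    (∫ ω, (B (N ω) ω - B (M ω) ω) ^ 2 ∂μ = ∫ ω, (N ω - M ω) ∂μ) ∧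
      ∫ ω, (N ω - M ω) ∂μ = (∫ ω, N ω ∂μ) - ∫ ω, M ω ∂μ := by
  classical
  -- integrability of M and N - M
  have hMint : Integrable M μ := by
    refine hint.mono' hMmeas.aestronglyMeasurable ?_
    filter_upwards [hMN] with ω h
    rw [Real.norm_eq_abs, abs_of_nonneg (hMnonneg ω)]
    exact h
  have hsubint : Integrable (fun ω => N ω - M ω) μ := hint.sub hMint
  have hpart2 : ∫ ω, (N ω - M ω) ∂μ = (∫ ω, N ω ∂μ) - ∫ ω, M ω ∂μ :=
    integral_sub hint hMint
  -- the joint maps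
  set Φ : Ω → ℝ × ℝ := fun ω => (M ω, N ω) with hΦdef
  set Ψ : Ω → (ℝ → ℝ) := fun ω t => B t ω with hΨdef
  have hΦ : Measurable Φ := hMmeas.prodMk hNmeas
  have hΨ : Measurable Ψ := measurable_pi_lambda _ fun t => hB.measurable t
  have hpair : Measurable fun ω => (Φ ω, Ψ ω) := hΦ.prodMk hΨ
  have hprod : μ.map (fun ω => (Φ ω, Ψ ω)) = (μ.map Φ).prod (μ.map Ψ) :=
    (indepFun_iff_map_prod_eq_prod_map_map hΦ.aemeasurable hΨ.aemeasurable).mp hindep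
  haveI : IsProbabilityMeasure (μ.map Φ) := Measure.isProbabilityMeasure_map hΦ.aemeasurable
  haveI : IsProbabilityMeasure (μ.map Ψ) := Measure.isProbabilityMeasure_map hΨ.aemeasurable
  -- pointwise identification
  have hpt : ∀ ω, Fsq (Φ ω, Ψ ω) = ENNReal.ofReal ((B (N ω) ω - B (M ω) ω) ^ 2) :=
    fun ω => Fsq_eval (hB.cont_paths ω) (hMnonneg ω) (hNnonneg ω)
  -- the key lintegral computation
  have hL : ∫⁻ ω, ENNReal.ofReal ((B (N ω) ω - B (M ω) ω) ^ 2) ∂μ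
      = ∫⁻ ω, ENNReal.ofReal (N ω - M ω) ∂μ := by
    have step1 : ∫⁻ ω, ENNReal.ofReal ((B (N ω) ω - B (M ω) ω) ^ 2) ∂μ
        = ∫⁻ p, Fsq p ∂(μ.map (fun ω => (Φ ω, Ψ ω))) := by
      rw [lintegral_map measurable_Fsq hpair]
      exact (lintegral_congr fun ω => (hpt ω).symm)
    have step2 : ∫⁻ p, Fsq p ∂((μ.map Φ).prod (μ.map Ψ))
        = ∫⁻ q, ∫⁻ f, Fsq (q, f) ∂(μ.map Ψ) ∂(μ.map Φ) :=
      lintegral_prod _ measurable_Fsq.aemeasurable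
    -- inner integral for a.e. q
    have hae : ∀ᵐ q ∂(μ.map Φ), 0 ≤ q.1 ∧ q.1 ≤ q.2 := by
      rw [ae_map_iff hΦ.aemeasurable]
      · filter_upwards [hMN] with ω h
        exact ⟨hMnonneg ω, h⟩
      · exact (measurableSet_le measurable_const measurable_fst).inter
          (measurableSet_le measurable_fst measurable_snd)
    have hinner : ∀ᵐ q ∂(μ.map Φ),
        ∫⁻ f, Fsq (q, f) ∂(μ.map Ψ) = ENNReal.ofReal (q.2 - q.1) := by
      filter_upwards [hae] with q hq
      have hmeasq : Measurable fun f : ℝ → ℝ => Fsq (q, f) :=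
        measurable_Fsq.comp (measurable_prodMk_left)
      rw [lintegral_map hmeasq hΨ]
      have : ∀ ω, Fsq (q, Ψ ω) = ENNReal.ofReal ((B q.2 ω - B q.1 ω) ^ 2) := fun ω =>
        Fsq_eval (hB.cont_paths ω) hq.1 (hq.1.trans hq.2)
      rw [lintegral_congr this]
      exact bm_sq_moment μ B hB hq.1 hq.2
    have step3 : ∫⁻ q, ∫⁻ f, Fsq (q, f) ∂(μ.map Ψ) ∂(μ.map Φ)
        = ∫⁻ q, ENNReal.ofReal (q.2 - q.1) ∂(μ.map Φ) := lintegral_congr_ae hinner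
    have step4 : ∫⁻ q : ℝ × ℝ, ENNReal.ofReal (q.2 - q.1) ∂(μ.map Φ)
        = ∫⁻ ω, ENNReal.ofReal (N ω - M ω) ∂μ :=
      lintegral_map ((measurable_snd.sub measurable_fst).ennreal_ofReal) hΦ
    rw [step1, hprod, step2, step3, step4]
  -- convert to Bochner integrals
  have hrhs : ENNReal.ofReal (∫ ω, (N ω - M ω) ∂μ) = ∫⁻ ω, ENNReal.ofReal (N ω - M ω) ∂μ :=
    ofReal_integral_eq_lintegral_ofReal hsubint
      (by filter_upwards [hMN] with ω h; exact sub_nonneg.mpr h)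
  have hgmeas : Measurable fun ω => (B (N ω) ω - B (M ω) ω) ^ 2 := by
    have : (fun ω => (B (N ω) ω - B (M ω) ω) ^ 2)
        = fun ω => (Fsq (Φ ω, Ψ ω)).toReal := by
      funext ω
      rw [hpt ω, ENNReal.toReal_ofReal (sq_nonneg _)]
    rw [this]
    exact (measurable_Fsq.comp hpair).ennreal_toReal
  have hlhs : ∫ ω, (B (N ω) ω - B (M ω) ω) ^ 2 ∂μ
      = (∫⁻ ω, ENNReal.ofReal ((B (N ω) ω - B (M ω) ω) ^ 2) ∂μ).toReal :=
    integral_eq_lintegral_of_nonneg_ae (Filter.Eventually.of_forall fun ω => sq_nonneg _)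
      hgmeas.aestronglyMeasurable
  have hsubnonneg : 0 ≤ ∫ ω, (N ω - M ω) ∂μ :=
    integral_nonneg_of_ae (by filter_upwards [hMN] with ω h; exact sub_nonneg.mpr h)
  refine ⟨?_, hpart2⟩
  rw [hlhs, hL, ← hrhs, ENNReal.toReal_ofReal hsubnonneg]
end
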